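/- Let 0 < ρ < R and let M : [ρ, R] → ℝ be twice continuously differentiable with M''(r) + (1/r)M'(r) = λ·M(r) on (ρ, R) for some λ > 0, boundary conditions M(ρ) = 1 and M'(R) = −M(R). Then M(r) ≥ 0 for all r ∈ [ρ, R]. -/

import Mathlib

/-
Maximum principle. Let `r₀` be a minimum point of `M` on `[ρ, R]` and suppose `M r₀ < 0`.
Then `r₀ ≠ ρ` since `M ρ = 1`. If `r₀ = R`, the minimum forces `M'(R) ≤ 0`, while the Robin
condition gives `M'(R) = -M(R) > 0`. If `r₀` is interior, then `M'(r₀) = 0` and `M''(r₀) ≥ 0`,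
while the equation gives `M''(r₀) = λ M(r₀) < 0`.
-/

open Set Filter Topology

lemma IsMinOn.deriv_nonpos_of_right_endpoint {f : ℝ → ℝ} {a b : ℝ} (hab : a < b)
    (h : IsMinOn f (Icc a b) b) : deriv f b ≤ 0 := by
  by_cases hf : DifferentiableAt ℝ f b
  · have hcone : a - b ∈ posTangentConeAt (Icc a b) b :=
      sub_mem_posTangentConeAt_of_segment_subset
        ((convex_Icc a b).segment_subset (right_mem_Icc.mpr hab.le) (left_mem_Icc.mpr hab.le))
    have hnonneg := (h.localize.on_subset subset_rfl).hasFDerivWithinAt_nonneg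
      hf.hasDerivAt.hasFDerivAt.hasFDerivWithinAt hcone
    rw [ContinuousLinearMap.toSpanSingleton_apply, smul_eq_mul] at hnonneg
    nlinarith
  · exact (deriv_zero_of_not_differentiableAt hf).le

/-- Continuity is needed: `deriv` takes the junk value `0` where `f` is not differentiable, so
`f t = -t²` for `t ≠ 0`, `f 0 = -1` would be a counterexample. -/
lemma IsLocalMin.deriv_deriv_nonneg {f : ℝ → ℝ} {x : ℝ} (h : IsLocalMin f x)
    (hc : ContinuousAt f x) : 0 ≤ deriv (deriv f) x := by
  by_contra! hneg
  have hmax : IsLocalMax f x := isLocalMax_of_deriv_deriv_neg hneg h.deriv_eq_zero hc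
  have hconst : ∀ᶠ y in 𝓝 x, f y = f x := by
    filter_upwards [h, hmax] with y hmin hmax using le_antisymm hmax hmin
  have hderiv : deriv f =ᶠ[𝓝 x] fun _ => 0 := by
    filter_upwards [hconst.eventually_nhds] with y (hy : f =ᶠ[𝓝 y] fun _ => f x)
    rw [hy.deriv_eq, deriv_const]
  rw [hderiv.deriv_eq, deriv_const] at hneg
  exact lt_irrefl 0 hneg

theorem stmt1_general (ρ R lam : ℝ) (hρR : ρ < R) (hlam : 0 < lam)
    (M : ℝ → ℝ) (hM : ContDiffOn ℝ 2 M (Set.Icc ρ R))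
    (hode : ∀ r ∈ Set.Ioo ρ R,
      deriv (deriv M) r + (1 / r) * deriv M r = lam * M r)
    (hbρ : M ρ = 1) (hbR : deriv M R = - M R) :
    ∀ r ∈ Set.Icc ρ R, 0 ≤ M r := by
  obtain ⟨r₀, hr₀, hmin⟩ :=
    isCompact_Icc.exists_isMinOn (nonempty_Icc.mpr hρR.le) hM.continuousOn
  suffices 0 ≤ M r₀ from fun r hr => this.trans (hmin hr)
  by_contra! hneg
  have hρr₀ : ρ < r₀ := hr₀.1.lt_of_ne fun h => by rw [← h, hbρ] at hneg; linarith
  rcases hr₀.2.lt_or_eq with hr₀R | rfl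
  · have hloc : IsLocalMin M r₀ := hmin.isLocalMin (Icc_mem_nhds hρr₀ hr₀R)
    have hM'' := hloc.deriv_deriv_nonneg
      (hM.continuousOn.continuousAt (Icc_mem_nhds hρr₀ hr₀R))
    have hode₀ := hode r₀ ⟨hρr₀, hr₀R⟩
    rw [hloc.deriv_eq_zero, mul_zero, add_zero] at hode₀
    nlinarith
  · linarith [hmin.deriv_nonpos_of_right_endpoint hρR]

/-- positivity of the radially symmetric steady state macrophage density. -/
theorem stmt1 (ρ R lam : ℝ) (hρ : 0 < ρ) (hρR : ρ < R) (hlam : 0 < lam)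
    (M : ℝ → ℝ) (hM : ContDiffOn ℝ 2 M (Set.Icc ρ R))
    (hode : ∀ r ∈ Set.Ioo ρ R,
      deriv (deriv M) r + (1 / r) * deriv M r = lam * M r)
    (hbρ : M ρ = 1) (hbR : deriv M R = - M R) :
    ∀ r ∈ Set.Icc ρ R, 0 ≤ M r :=
  stmt1_general ρ R lam hρR hlam M hM hode hbρ hbR
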